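/- arXiv:1809.09160 — 6 statements merged into one kernel-verified Lean document; each statement's English description precedes it below -/
import Mathlib

section
/- Let R be a (possibly noncommutative) ring, I a two-sided ideal of R, and S an arbitrary subset of R. Then the set N^r_{(R mod I)}(S) = {f ∈ R[x] : f_r(s) ∈ I for all s ∈ S} of right null-polynomials modulo I on S is a left ideal of R[x]: it is an additive subgroup of R[x] and for every g ∈ R[x] and every f ∈ N^r_{(R mod I)}(S), the product g·f lies in N^r_{(R mod I)}(S). -/
open Polynomial

/-- The set `N^r_{(R mod I)}(S)` of right null-polynomials modulo a two-sided ideal `I`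
on a subset `S` of `R`.  For a possibly noncommutative ring `R`, Mathlib's
`Polynomial.eval s f = ∑ k, f.coeff k * s ^ k` is exactly the right polynomial
function `f_r(s)`. -/
def rightNullPolysModOn (R : Type*) [Ring R] (I : TwoSidedIdeal R) (S : Set R) : Set R[X] :=
  {f : R[X] | ∀ s ∈ S, f.eval s ∈ I}

/- Evaluation is not multiplicative over a noncommutative ring; this is what survives,
because `X` is central in `R[X]`. -/
theorem Polynomial.eval_monomial_mul {R : Type*} [Semiring R] (n : ℕ) (a : R) (f : R[X])
    (s : R) : (monomial n a * f).eval s = a * (f.eval s * s ^ n) := by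
  rw [← C_mul_X_pow_eq_monomial, mul_assoc, eval_C_mul, X_pow_mul, eval_mul_X_pow]

theorem Polynomial.eval_mul_mem_of_eval_mem {R : Type*} [Ring R] {I : TwoSidedIdeal R}
    {f : R[X]} {s : R} (hf : f.eval s ∈ I) (g : R[X]) : (g * f).eval s ∈ I := by
  induction g using Polynomial.induction_on' with
  | add p q hp hq => simpa only [add_mul, eval_add] using I.add_mem hp hq
  | monomial n a =>
    rw [eval_monomial_mul]
    exact I.mul_mem_left _ _ (I.mul_mem_right _ _ hf)

def rightNullIdealModOn (R : Type*) [Ring R] (I : TwoSidedIdeal R) (S : Set R) : Ideal R[X] where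
  carrier := rightNullPolysModOn R I S
  zero_mem' s _ := by simpa only [eval_zero] using I.zero_mem
  add_mem' hf hg s hs := by simpa only [eval_add] using I.add_mem (hf s hs) (hg s hs)
  smul_mem' g _ hf s hs := eval_mul_mem_of_eval_mem (hf s hs) g

/-- `N^r_{(R mod I)}(S)` is a left ideal of `R[x]`: an additive subgroup closed under
multiplication from the left by arbitrary polynomials. -/
theorem rightNullPolysModOn_isLeftIdeal (R : Type*) [Ring R] (I : TwoSidedIdeal R) (S : Set R) :
    (0 : R[X]) ∈ rightNullPolysModOn R I S ∧
    (∀ f ∈ rightNullPolysModOn R I S, ∀ g ∈ rightNullPolysModOn R I S,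
      f + g ∈ rightNullPolysModOn R I S) ∧
    (∀ f ∈ rightNullPolysModOn R I S, -f ∈ rightNullPolysModOn R I S) ∧
    (∀ g : R[X], ∀ f ∈ rightNullPolysModOn R I S, g * f ∈ rightNullPolysModOn R I S) :=
  let L := rightNullIdealModOn R I S
  ⟨L.zero_mem, fun _ hf _ hg => L.add_mem hf hg, fun _ hf => L.neg_mem hf,
    fun g _ hf => L.smul_mem g hf⟩
end

section
/- Let D be an integral domain with quotient field K, A a finitely generated torsion-free D-algebra, B = A ⊗_D K, with A ∩ K = D under the canonical embeddings into B, and let S ⊆ A. Then S is a right ringset (i.e., Int^r_B(S,A) = {F ∈ B[x] : F_r(s) ∈ A for all s ∈ S} is closed under multiplication) if and only if, for every nonzero d ∈ D, the set N^r_{(A mod dA)}(S) = {f ∈ A[x] : f_r(s) ∈ dA for all s ∈ S} is a right ideal of A[x]. -/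
/-!
Right evaluation satisfies `(f * g)(s) = (f * C (g(s)))(s)`, so closure under products reduces
to closure under right multiplication by constants. Since `B` is the localization of `A` at
`D ∖ {0}`, every `F ∈ B[x]` is `f / d` with `f ∈ A[x]`, and `F` is integer-valued on `S` exactly
when `f ∈ N_d`. If `Int` is a ring, `(f / d) * g(s) ∈ Int` puts `f * C (g(s))` in `N_d`.
Conversely, for `F = f / d`, `G = g / e` with `g(s) = e b`, we get
`(f g)(s) = e (f * C b)(s) ∈ d e A` when `N_d` is a right ideal, i.e. `F G ∈ Int`.
-/

open Polynomial TensorProduct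

/-- The set `Int^r_B(S,A)` of right integer-valued polynomials on `S ⊆ A`, where
`B = A ⊗_D K` and `A` is embedded in `B` via `a ↦ a ⊗ 1`.  Right evaluation is
Mathlib's `Polynomial.eval s f = ∑ k, f.coeff k * s ^ k`. -/
def IntRight (D K A : Type*) [CommRing D] [Field K] [Algebra D K]
    [Ring A] [Algebra D A] (S : Set A) : Set (A ⊗[D] K)[X] :=
  {F : (A ⊗[D] K)[X] | ∀ s ∈ S,
    F.eval (Algebra.TensorProduct.includeLeftRingHom (R := D) (B := K) s) ∈
      Set.range (Algebra.TensorProduct.includeLeftRingHom (R := D) (A := A) (B := K))}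

/-- A subset `N` of a (possibly noncommutative) ring is a right ideal:
an additive subgroup closed under multiplication from the right. -/
def IsRightIdealSet {R : Type*} [Ring R] (N : Set R) : Prop :=
  0 ∈ N ∧ (∀ a ∈ N, ∀ b ∈ N, a + b ∈ N) ∧ (∀ a ∈ N, -a ∈ N) ∧
    ∀ g : R, ∀ a ∈ N, a * g ∈ N

theorem Polynomial.eval_mul_eq_eval_mul_C_eval {R : Type*} [Ring R] (f g : R[X]) (s : R) :
    (f * g).eval s = (f * C (g.eval s)).eval s := by
  induction f using Polynomial.induction_on' with
  | add p q hp hq => rw [add_mul, eval_add, hp, hq, add_mul, eval_add]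
  | monomial m b =>
    rw [monomial_mul_C, eval_monomial, ← C_mul_X_pow_eq_monomial, mul_assoc,
      (commute_X_pow g m).eq, eval_C_mul, eval_mul_X_pow, mul_assoc]

section NullSet

variable {R A : Type*} [CommSemiring R] [Ring A] [Algebra R A]

/-- `N^r_{(A mod dA)}(S)`. -/
def rightNullSetMod (S : Set A) (d : R) : Set A[X] :=
  {f | ∀ s ∈ S, f.eval s ∈ Set.range (fun a : A => d • a)}

variable {S : Set A}

theorem isRightIdealSet_rightNullSetMod_iff {d : R} :
    IsRightIdealSet (rightNullSetMod S d) ↔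
      ∀ f ∈ rightNullSetMod S d, ∀ b : A, f * C b ∈ rightNullSetMod S d := by
  refine ⟨fun hN f hf b => hN.2.2.2 (C b) f hf, fun hN => ⟨?_, ?_, ?_, ?_⟩⟩
  · exact fun s _ => ⟨0, by simp⟩
  · rintro f hf g hg s hs
    obtain ⟨a, ha⟩ := hf s hs
    obtain ⟨b, hb⟩ := hg s hs
    exact ⟨a + b, by simp only [smul_add, ha, hb, eval_add]⟩
  · rintro f hf s hs
    obtain ⟨a, ha⟩ := hf s hs
    exact ⟨-a, by simp only [smul_neg, ha, eval_neg]⟩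
  · intro g f hf s hs
    show (f * g).eval s ∈ _
    rw [eval_mul_eq_eval_mul_C_eval]
    exact hN f hf (g.eval s) s hs

theorem mul_mem_rightNullSetMod_mul {d e : R} (hN : IsRightIdealSet (rightNullSetMod S d))
    {f g : A[X]} (hf : f ∈ rightNullSetMod S d) (hg : g ∈ rightNullSetMod S e) :
    f * g ∈ rightNullSetMod S (d * e) := by
  intro s hs
  obtain ⟨b, hb⟩ := hg s hs
  obtain ⟨a, ha⟩ := hN.2.2.2 (C b) f hf s hs
  refine ⟨a, ?_⟩
  simp only at ha hb ⊢
  rw [eval_mul_eq_eval_mul_C_eval, ← hb, ← smul_C, mul_smul_comm, eval_smul, ← ha, smul_smul,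
    mul_comm]

end NullSet

section Localization

variable {R A B : Type*} [CommSemiring R] (M : Submonoid R) [Ring A] [Algebra R A]
  [Ring B] [Algebra R B] (ι : A →ₐ[R] B) [IsLocalizedModule M ι.toLinearMap]

theorem Polynomial.map_algHom_smul (c : R) (f : A[X]) :
    (c • f).map (ι : A →+* B) = c • f.map (ι : A →+* B) := by
  ext n
  simp only [coeff_map, coeff_smul, RingHom.coe_coe, map_smul]

/-- `Int^r_B(S, A)` for `A` embedded in its localization `B` by `ι`. -/
def rightIntValued (S : Set A) : Set B[X] :=
  {F | ∀ s ∈ S, F.eval (ι s) ∈ Set.range ι}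

theorem exists_map_eq_smul (F : B[X]) :
    ∃ d : M, ∃ f : A[X], f.map (ι : A →+* B) = (d : R) • F := by
  induction F using Polynomial.induction_on' with
  | monomial n x =>
    obtain ⟨⟨a, d⟩, had⟩ := IsLocalizedModule.surj M ι.toLinearMap x
    exact ⟨d, monomial n a, by rw [map_monomial, smul_monomial, ← Submonoid.smul_def, had]; rfl⟩
  | add F G hF hG =>
    obtain ⟨d, f, hf⟩ := hF
    obtain ⟨e, g, hg⟩ := hG
    refine ⟨d * e, (e : R) • f + (d : R) • g, ?_⟩
    rw [Polynomial.map_add, map_algHom_smul, map_algHom_smul, hf, hg, smul_smul, smul_smul,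
      Submonoid.coe_mul, mul_comm (e : R), smul_add]

variable {M ι}

theorem mem_range_iff_mem_range_smul (hι : Function.Injective ι) {d : R} (hd : d ∈ M)
    {x : B} {a : A} (hax : ι a = d • x) :
    x ∈ Set.range ι ↔ a ∈ Set.range (fun a : A => d • a) := by
  constructor
  · rintro ⟨c, rfl⟩
    exact ⟨c, hι (by rw [map_smul, hax])⟩
  · rintro ⟨c, rfl⟩
    refine ⟨c, (IsLocalizedModule.smul_inj ι.toLinearMap ⟨d, hd⟩ _ _).mp ?_⟩
    simp only [Submonoid.smul_def]
    exact (map_smul ι d c).symm.trans hax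

theorem mem_rightIntValued_iff (hι : Function.Injective ι) {d : R} (hd : d ∈ M) {F : B[X]}
    {f : A[X]} (hfF : f.map (ι : A →+* B) = d • F) (S : Set A) :
    F ∈ rightIntValued ι S ↔ f ∈ rightNullSetMod S d :=
  forall₂_congr fun s _ => mem_range_iff_mem_range_smul hι hd <| by
    rw [← eval_smul, ← hfF, eval_map]
    exact (eval₂_at_apply (ι : A →+* B) s).symm

theorem mul_mem_rightIntValued_iff (hι : Function.Injective ι) (S : Set A) :
    (∀ F ∈ rightIntValued ι S, ∀ G ∈ rightIntValued ι S, F * G ∈ rightIntValued ι S) ↔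
      ∀ d ∈ M, IsRightIdealSet (rightNullSetMod S d) := by
  constructor
  · intro hmul d hd
    obtain ⟨u, hu⟩ : ∃ u : B, d • u = 1 := ⟨IsLocalizedModule.mk' ι.toLinearMap 1 ⟨d, hd⟩,
      (IsLocalizedModule.mk'_cancel' ι.toLinearMap 1 ⟨d, hd⟩).trans (map_one ι)⟩
    refine isRightIdealSet_rightNullSetMod_iff.mpr fun f hf b => ?_
    have hF : f.map (ι : A →+* B) = d • (f.map (ι : A →+* B) * C u) := by
      rw [← mul_smul_comm, smul_C, hu, C_1, mul_one]
    have hFb : (f * C b).map (ι : A →+* B) = d • (f.map (ι : A →+* B) * C u * C (ι b)) := by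
      rw [← smul_mul_assoc, ← hF, Polynomial.map_mul, map_C]
      rfl
    have hCb : C (ι b) ∈ rightIntValued ι S := fun s _ => ⟨b, (eval_C).symm⟩
    exact (mem_rightIntValued_iff hι hd hFb S).mp <|
      hmul _ ((mem_rightIntValued_iff hι hd hF S).mpr hf) _ hCb
  · intro hN F hF G hG
    obtain ⟨d, f, hf⟩ := exists_map_eq_smul M ι F
    obtain ⟨e, g, hg⟩ := exists_map_eq_smul M ι G
    have hfg : (f * g).map (ι : A →+* B) = ((d * e : M) : R) • (F * G) := by
      rw [Polynomial.map_mul, hf, hg, smul_mul_smul_comm, Submonoid.coe_mul]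
    exact (mem_rightIntValued_iff hι (d * e).2 hfg S).mpr <|
      mul_mem_rightNullSetMod_mul (hN d d.2) ((mem_rightIntValued_iff hι d.2 hf S).mp hF)
        ((mem_rightIntValued_iff hι e.2 hg S).mp hG)

end Localization

namespace Algebra.TensorProduct

instance isLocalizedModule_includeLeft {R : Type*} [CommSemiring R] (M : Submonoid R)
    {L : Type*} [CommSemiring L] [Algebra R L] [IsLocalization M L]
    {A : Type*} [Semiring A] [Algebra R A] :
    IsLocalizedModule M (includeLeft : A →ₐ[R] A ⊗[R] L).toLinearMap := by
  have h : (includeLeft : A →ₐ[R] A ⊗[R] L).toLinearMap =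
      (_root_.TensorProduct.comm R L A).toLinearMap ∘ₗ TensorProduct.mk R L A 1 := by
    ext
    simp
  rw [h]
  infer_instance

theorem includeLeft_injective_of_isFractionRing {D : Type*} [CommRing D] [IsDomain D]
    {K : Type*} [CommRing K] [Algebra D K] [IsFractionRing D K]
    {A : Type*} [Ring A] [Algebra D A] [NoZeroSMulDivisors D A] :
    Function.Injective (includeLeft : A →ₐ[D] A ⊗[D] K) :=
  (IsLocalizedModule.injective_iff_isRegular (nonZeroDivisors D)
    (includeLeft : A →ₐ[D] A ⊗[D] K).toLinearMap).mpr fun c =>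
    smul_right_injective A (nonZeroDivisors.coe_ne_zero c)

end Algebra.TensorProduct

theorem rightRingset_iff_rightNullIdealSet_mod_general
    (D : Type*) [CommRing D] [IsDomain D]
    (K : Type*) [Field K] [Algebra D K] [IsFractionRing D K]
    (A : Type*) [Ring A] [Algebra D A] [NoZeroSMulDivisors D A]
    (S : Set A) :
    (∀ F ∈ IntRight D K A S, ∀ G ∈ IntRight D K A S, F * G ∈ IntRight D K A S) ↔
    (∀ d : D, d ≠ 0 →
      IsRightIdealSet {f : A[X] | ∀ s ∈ S, f.eval s ∈ Set.range (fun a : A => d • a)}) := by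
  refine (mul_mem_rightIntValued_iff (M := nonZeroDivisors D)
    (Algebra.TensorProduct.includeLeft_injective_of_isFractionRing (K := K)) S).trans ?_
  exact forall_congr' fun d => by rw [mem_nonZeroDivisors_iff_ne_zero]; rfl

/-- Theorem (link): `S ⊆ A` is a right ringset iff, for every nonzero `d ∈ D`,
`N^r_{(A mod dA)}(S) = {f ∈ A[x] : f_r(s) ∈ dA for all s ∈ S}` is a right ideal of `A[x]`. -/
theorem rightRingset_iff_rightNullIdealSet_mod
    (D : Type*) [CommRing D] [IsDomain D]
    (K : Type*) [Field K] [Algebra D K] [IsFractionRing D K]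
    (A : Type*) [Ring A] [Algebra D A] [Module.Finite D A] [NoZeroSMulDivisors D A]
    (hAK : ∀ b : A ⊗[D] K,
      b ∈ Set.range (Algebra.TensorProduct.includeLeftRingHom (R := D) (A := A) (B := K)) →
      b ∈ Set.range (Algebra.TensorProduct.includeRight (R := D) (A := A) (B := K)) →
      b ∈ Set.range (algebraMap D (A ⊗[D] K)))
    (S : Set A) :
    (∀ F ∈ IntRight D K A S, ∀ G ∈ IntRight D K A S, F * G ∈ IntRight D K A S) ↔
    (∀ d : D, d ≠ 0 →
      IsRightIdealSet {f : A[X] | ∀ s ∈ S, f.eval s ∈ Set.range (fun a : A => d • a)}) :=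
  rightRingset_iff_rightNullIdealSet_mod_general D K A S
end

section
/- Let D be an integral domain with quotient field K, A a finitely generated torsion-free D-algebra, B = A ⊗_D K, with A ∩ K = D under the canonical embeddings into B, and suppose that ⋂_{d ∈ D∖{0}} dA = (0). If s ∈ A is not in the center of A, then the singleton {s} is not a right ringset; explicitly, if t ∈ A satisfies ts ≠ st and d ∈ D∖{0} is chosen with ts − st ∉ dA, then the polynomials F(x) = d^{-1}(x − s) and the constant polynomial t both belong to Int^r_B({s},A), but their product F·t does not, since (F t)_r(s) = d^{-1}(ts − st) ∉ A. -/
/-!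
Beyond the computation `(d⁻¹ (x - s) · t)_r(s) = d⁻¹ (t s - s t)`, which holds because `x` commutes
with the coefficients, the one input is that `a ↦ a ⊗ 1` is injective on `A`: `A ⊗_D K` is the
localization of the torsion-free module `A` at the nonzero divisors of `D`.
-/

open Polynomial TensorProduct

section BaseChange

variable {D : Type*} [CommRing D] (K : Type*) [Field K] [Algebra D K] [IsFractionRing D K]
  {M : Type*} [AddCommGroup M] [Module D M] [Module.IsTorsionFree D M]

theorem TensorProduct.tmul_one_injective : Function.Injective fun m : M => m ⊗ₜ[D] (1 : K) := by
  have hmk : Function.Injective (TensorProduct.mk D K M 1) :=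
    (IsLocalizedModule.injective_iff_isRegular (nonZeroDivisors D) _).mpr fun c =>
      Module.IsTorsionFree.isSMulRegular (isRegular_iff_mem_nonZeroDivisors.mpr c.2)
  exact (TensorProduct.comm D K M).injective.comp hmk

theorem TensorProduct.eq_smul_of_tmul_inv_eq_tmul_one {d : D} (hd : d ∈ nonZeroDivisors D)
    {m n : M} (h : m ⊗ₜ[D] (algebraMap D K d)⁻¹ = n ⊗ₜ[D] (1 : K)) : m = d • n := by
  have hd' : algebraMap D K d ≠ 0 := (IsLocalization.map_units K ⟨d, hd⟩).ne_zero
  apply tmul_one_injective (D := D) K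
  calc m ⊗ₜ[D] (1 : K) = d • (m ⊗ₜ[D] (algebraMap D K d)⁻¹) := by
        rw [← tmul_smul, _root_.Algebra.smul_def, mul_inv_cancel₀ hd']
    _ = (d • n) ⊗ₜ[D] (1 : K) := by rw [h, smul_tmul']

end BaseChange

theorem exists_ne_zero_notMem_range_smul {D M : Type*} [Zero D] [Zero M] [SMul D M]
    (hcap : (⋂ (d : D) (_ : d ≠ 0), Set.range fun m : M => d • m) = {0}) {m : M} (hm : m ≠ 0) :
    ∃ d : D, d ≠ 0 ∧ m ∉ Set.range fun n : M => d • n := by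
  by_contra! h
  have hm' : m ∈ ⋂ (d : D) (_ : d ≠ 0), Set.range fun n : M => d • n := by simpa using h
  exact hm (by simpa [hcap] using hm')

theorem Polynomial.eval_C_mul_X_sub_C_mul_C {R : Type*} [Ring R] (c u t : R) :
    (C c * (X - C u) * C t).eval u = c * (t * u - u * t) := by
  rw [mul_assoc, sub_mul, X_mul, ← C_mul, eval_C_mul, eval_sub, eval_C_mul, eval_X, eval_C]

section IntRight

variable {D : Type*} [CommRing D] {K : Type*} [Field K] [Algebra D K]
  {A : Type*} [Ring A] [Algebra D A]

theorem mem_intRight_singleton {s : A} {F : (A ⊗[D] K)[X]} :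
    F ∈ IntRight D K A {s} ↔
      F.eval (s ⊗ₜ[D] (1 : K)) ∈ Set.range fun a : A => a ⊗ₜ[D] (1 : K) := by
  simp [IntRight]

variable [IsFractionRing D K] [Module.IsTorsionFree D A]

theorem intRight_singleton_witnesses (s t : A) {d : D} (hd : d ∈ nonZeroDivisors D)
    (hdt : t * s - s * t ∉ Set.range fun a : A => d • a) :
    (C (Algebra.TensorProduct.includeRight (R := D) (A := A) (B := K)
          ((algebraMap D K d)⁻¹)) *
        (X - C (Algebra.TensorProduct.includeLeftRingHom (R := D) (B := K) s))
        ∈ IntRight D K A {s}) ∧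
    (C (Algebra.TensorProduct.includeLeftRingHom (R := D) (B := K) t)
        ∈ IntRight D K A {s}) ∧
    (C (Algebra.TensorProduct.includeRight (R := D) (A := A) (B := K)
          ((algebraMap D K d)⁻¹)) *
        (X - C (Algebra.TensorProduct.includeLeftRingHom (R := D) (B := K) s)) *
        C (Algebra.TensorProduct.includeLeftRingHom (R := D) (B := K) t)
        ∉ IntRight D K A {s}) := by
  simp only [mem_intRight_singleton, Algebra.TensorProduct.includeRight_apply,
    Algebra.TensorProduct.includeLeftRingHom_apply]
  refine ⟨⟨0, by simp⟩, ⟨t, by simp⟩, ?_⟩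
  rintro ⟨a, ha⟩
  have hval : (1 ⊗ₜ[D] (algebraMap D K d)⁻¹) * ((t ⊗ₜ[D] (1 : K)) * (s ⊗ₜ[D] 1) -
      (s ⊗ₜ[D] 1) * (t ⊗ₜ[D] 1)) = (t * s - s * t) ⊗ₜ[D] (algebraMap D K d)⁻¹ := by
    simp only [Algebra.TensorProduct.tmul_mul_tmul, ← sub_tmul, one_mul, mul_one]
  rw [eval_C_mul_X_sub_C_mul_C, hval] at ha
  exact hdt ⟨a, (TensorProduct.eq_smul_of_tmul_inv_eq_tmul_one K hd ha.symm).symm⟩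

end IntRight

theorem singleton_not_rightRingset_of_not_central_general
    (D : Type*) [CommRing D] [IsDomain D]
    (K : Type*) [Field K] [Algebra D K] [IsFractionRing D K]
    (A : Type*) [Ring A] [Algebra D A] [NoZeroSMulDivisors D A]
    (hcap : (⋂ (d : D) (_ : d ≠ 0), Set.range fun a : A => d • a) = {0})
    (s : A) (hs : s ∉ Set.center A) :
    ¬ (∀ F ∈ IntRight D K A {s}, ∀ G ∈ IntRight D K A {s},
        F * G ∈ IntRight D K A {s}) ∧
    (∀ t : A, t * s ≠ s * t → ∀ d : D, d ≠ 0 →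
      t * s - s * t ∉ Set.range (fun a : A => d • a) →
      (C (Algebra.TensorProduct.includeRight (R := D) (A := A) (B := K)
            ((algebraMap D K d)⁻¹)) *
          (X - C (Algebra.TensorProduct.includeLeftRingHom (R := D) (B := K) s))
          ∈ IntRight D K A {s}) ∧
      (C (Algebra.TensorProduct.includeLeftRingHom (R := D) (B := K) t)
          ∈ IntRight D K A {s}) ∧
      (C (Algebra.TensorProduct.includeRight (R := D) (A := A) (B := K)
            ((algebraMap D K d)⁻¹)) *
          (X - C (Algebra.TensorProduct.includeLeftRingHom (R := D) (B := K) s)) *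
          C (Algebra.TensorProduct.includeLeftRingHom (R := D) (B := K) t)
          ∉ IntRight D K A {s})) := by
  have witnesses := fun (t : A) (d : D) (hd : d ≠ 0) =>
    intRight_singleton_witnesses (K := K) s t (mem_nonZeroDivisors_of_ne_zero hd)
  refine ⟨fun hmul => ?_, fun t _ d hd => witnesses t d hd⟩
  obtain ⟨t, ht⟩ : ∃ t, t * s ≠ s * t := by
    simpa [Semigroup.mem_center_iff] using hs
  obtain ⟨d, hd, hdt⟩ := exists_ne_zero_notMem_range_smul hcap (sub_ne_zero_of_ne ht)
  obtain ⟨hF, hC, hFC⟩ := witnesses t d hd hdt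
  exact hFC (hmul _ hF _ hC)

/-- Suppose `⋂_{d ∈ D∖{0}} dA = (0)`.  If `s ∈ A` is not central, then `{s}` is not a
right ringset; explicitly, if `t s ≠ s t` and `d ≠ 0` with `t s − s t ∉ dA`, then
`F(x) = d⁻¹ (x − s)` and the constant polynomial `t` both lie in `Int^r_B({s},A)`,
but their product `F · t` does not, since `(F t)_r(s) = d⁻¹(t s − s t) ∉ A`. -/
theorem singleton_not_rightRingset_of_not_central
    (D : Type*) [CommRing D] [IsDomain D]
    (K : Type*) [Field K] [Algebra D K] [IsFractionRing D K]
    (A : Type*) [Ring A] [Algebra D A] [Module.Finite D A] [NoZeroSMulDivisors D A]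
    (hAK : ∀ b : A ⊗[D] K,
      b ∈ Set.range (Algebra.TensorProduct.includeLeftRingHom (R := D) (A := A) (B := K)) →
      b ∈ Set.range (Algebra.TensorProduct.includeRight (R := D) (A := A) (B := K)) →
      b ∈ Set.range (algebraMap D (A ⊗[D] K)))
    (hcap : (⋂ (d : D) (_ : d ≠ 0), Set.range fun a : A => d • a) = {0})
    (s : A) (hs : s ∉ Set.center A) :
    ¬ (∀ F ∈ IntRight D K A {s}, ∀ G ∈ IntRight D K A {s},
        F * G ∈ IntRight D K A {s}) ∧
    (∀ t : A, t * s ≠ s * t → ∀ d : D, d ≠ 0 →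
      t * s - s * t ∉ Set.range (fun a : A => d • a) →
      (C (Algebra.TensorProduct.includeRight (R := D) (A := A) (B := K)
            ((algebraMap D K d)⁻¹)) *
          (X - C (Algebra.TensorProduct.includeLeftRingHom (R := D) (B := K) s))
          ∈ IntRight D K A {s}) ∧
      (C (Algebra.TensorProduct.includeLeftRingHom (R := D) (B := K) t)
          ∈ IntRight D K A {s}) ∧
      (C (Algebra.TensorProduct.includeRight (R := D) (A := A) (B := K)
            ((algebraMap D K d)⁻¹)) *
          (X - C (Algebra.TensorProduct.includeLeftRingHom (R := D) (B := K) s)) *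
          C (Algebra.TensorProduct.includeLeftRingHom (R := D) (B := K) t)
          ∉ IntRight D K A {s})) :=
  singleton_not_rightRingset_of_not_central_general D K A hcap s hs
end

section
/- Let D be an integral domain with quotient field K, A a finitely generated torsion-free D-algebra, B = A ⊗_D K, with A ∩ K = D under the canonical embeddings into B, and S ⊆ A. Then Int^r_B(S,A) is closed under multiplication (i.e., is a ring) if and only if Int^r_B(S,A) is closed under right multiplication by the constant polynomials from A (i.e., F ∈ Int^r_B(S,A) and a ∈ A imply F·a ∈ Int^r_B(S,A)). -/
open Polynomial TensorProduct

/-- Right evaluation is not multiplicative, but `G` may be replaced by the constant `G(x)`: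
in `F * (b X^n)` the power `x^n` commutes with every power of `x`. -/
theorem Polynomial.eval_mul_eq_eval_mul_C_eval_s13 {R : Type*} [Semiring R] (F G : R[X]) (x : R) :
    (F * G).eval x = (F * C (G.eval x)).eval x := by
  induction G using Polynomial.induction_on' with
  | add G H hG hH => simp only [mul_add, eval_add, C_add, hG, hH]
  | monomial n b =>
    rw [eval_monomial, ← C_mul_X_pow_eq_monomial, ← mul_assoc, eval_mul_X_pow, C_mul,
      ← mul_assoc, eval_mul_C_of_commute (Commute.pow_self x n)]

theorem intRight_ring_iff_closed_under_constants_general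
    (D : Type*) [CommRing D]
    (K : Type*) [Field K] [Algebra D K]
    (A : Type*) [Ring A] [Algebra D A]
    (S : Set A) :
    (∀ F ∈ IntRight D K A S, ∀ G ∈ IntRight D K A S, F * G ∈ IntRight D K A S) ↔
    (∀ F ∈ IntRight D K A S, ∀ a : A,
      F * Polynomial.C (Algebra.TensorProduct.includeLeftRingHom (R := D) (B := K) a)
        ∈ IntRight D K A S) := by
  constructor
  · intro hmul F hF a
    have hC : C (Algebra.TensorProduct.includeLeftRingHom (R := D) (B := K) a) ∈
        IntRight D K A S := fun _ _ => by
      rw [eval_C]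
      exact ⟨a, rfl⟩
    exact hmul F hF _ hC
  · intro hconst F hF G hG s hs
    obtain ⟨a, ha⟩ := hG s hs
    rw [eval_mul_eq_eval_mul_C_eval_s13, ← ha]
    exact hconst F hF a s hs

/-- `Int^r_B(S,A)` is closed under multiplication (i.e. is a ring) iff it is closed
under right multiplication by the constant polynomials from `A`. -/
theorem intRight_ring_iff_closed_under_constants
    (D : Type*) [CommRing D] [IsDomain D]
    (K : Type*) [Field K] [Algebra D K] [IsFractionRing D K]
    (A : Type*) [Ring A] [Algebra D A] [Module.Finite D A] [NoZeroSMulDivisors D A]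
    (hAK : ∀ b : A ⊗[D] K,
      b ∈ Set.range (Algebra.TensorProduct.includeLeftRingHom (R := D) (A := A) (B := K)) →
      b ∈ Set.range (Algebra.TensorProduct.includeRight (R := D) (A := A) (B := K)) →
      b ∈ Set.range (algebraMap D (A ⊗[D] K)))
    (S : Set A) :
    (∀ F ∈ IntRight D K A S, ∀ G ∈ IntRight D K A S, F * G ∈ IntRight D K A S) ↔
    (∀ F ∈ IntRight D K A S, ∀ a : A,
      F * Polynomial.C (Algebra.TensorProduct.includeLeftRingHom (R := D) (B := K) a)
        ∈ IntRight D K A S) :=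
  intRight_ring_iff_closed_under_constants_general D K A S
end

section
/- Let R be a (possibly noncommutative) ring, T a subring of R, and I a two-sided ideal of T. Suppose T is generated, as an algebra over its center Z(T), by its units. Then: (1) Pol^r(R,T,I) is closed under right multiplication by the constant polynomials from T, i.e., it is a right T-module; and (2) more generally, for every subset S ⊆ T that is closed under conjugation by units of T (u s u^{-1} ∈ S whenever s ∈ S and u is a unit of T), Pol^r(R,S,I) is closed under right multiplication by the constant polynomials from T, i.e., it is a right T-module. -/
/-!
The constants `t ∈ T` with `Pol^r(R,S,I) * t ⊆ Pol^r(R,S,I)` form a subring of `T`, so it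
suffices that they include the center and the units. A central `t` commutes with every `s`,
so `(f * t)(s) = f(s) * t`. For a unit `u`, `(f * u)(s) = f(u s u⁻¹) * u`, which lies in `I`
because `S` is stable under conjugation.
-/

open Polynomial

/-- `Pol^r(R,S,I)`: the polynomials in `R[x]` mapping every element of `S ⊆ T` into
the two-sided ideal `I` of the subring `T`, under right substitution (Mathlib's
`Polynomial.eval s f = ∑ k, f.coeff k * s ^ k` is exactly right evaluation). -/
def PolRight {R : Type*} [Ring R] (T : Subring R) (I : TwoSidedIdeal T) (S : Set T) :
    Set R[X] :=
  {f : R[X] | ∀ s ∈ S, f.eval (s : R) ∈ (fun t : T => (t : R)) '' (I : Set T)}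

theorem Polynomial.eval_mul_C_units {R : Type*} [Ring R] (f : R[X]) (u : Rˣ) (s : R) :
    (f * C (u : R)).eval s = f.eval (u * s * ↑u⁻¹) * u := by
  induction f using Polynomial.induction_on' with
  | add p q hp hq => simp only [add_mul, eval_add, hp, hq]
  | monomial n a =>
    rw [monomial_mul_C, eval_monomial, eval_monomial, Units.conj_pow]
    simp only [mul_assoc, Units.inv_mul, mul_one]

namespace PolRight

variable {R : Type*} [Ring R] {T : Subring R} {I : TwoSidedIdeal T} {S : Set T}

theorem coe_mul_mem_image {a : R} (ha : a ∈ (fun t : T => (t : R)) '' (I : Set T)) (t : T) :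
    a * t ∈ (fun t : T => (t : R)) '' (I : Set T) := by
  obtain ⟨i, hi, rfl⟩ := ha
  exact ⟨i * t, I.mul_mem_right _ _ hi, rfl⟩

theorem zero_mem : (0 : R[X]) ∈ PolRight T I S :=
  fun _ _ => ⟨0, I.zero_mem, by simp⟩

theorem add_mem {f g : R[X]} (hf : f ∈ PolRight T I S) (hg : g ∈ PolRight T I S) :
    f + g ∈ PolRight T I S := by
  intro s hs
  obtain ⟨i, hi, hfi⟩ := hf s hs
  obtain ⟨j, hj, hgj⟩ := hg s hs
  exact ⟨i + j, I.add_mem hi hj, by simp [hfi, hgj]⟩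

theorem neg_mem {f : R[X]} (hf : f ∈ PolRight T I S) : -f ∈ PolRight T I S := by
  intro s hs
  obtain ⟨i, hi, hfi⟩ := hf s hs
  exact ⟨-i, I.neg_mem hi, by simp [hfi]⟩

variable (T I S) in
def rightMultipliers : Subring T where
  carrier := {t | ∀ f ∈ PolRight T I S, f * C (t : R) ∈ PolRight T I S}
  zero_mem' _ _ := by simpa using zero_mem
  one_mem' f hf := by simpa using hf
  add_mem' hx hy f hf := by simpa [mul_add] using add_mem (hx f hf) (hy f hf)
  neg_mem' hx f hf := by simpa using neg_mem (hx f hf)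
  mul_mem' {x y} hx hy f hf := by simpa [mul_assoc] using hy _ (hx f hf)

theorem center_subset_rightMultipliers : Set.center T ⊆ rightMultipliers T I S := by
  intro x hx f hf s hs
  have hxs : Commute (x : R) (s : R) := congrArg Subtype.val ((Set.mem_center_iff.mp hx).comm s)
  rw [eval_mul_C_of_commute hxs]
  exact coe_mul_mem_image (hf s hs) x

theorem isUnit_subset_rightMultipliers
    (hS : ∀ u : Tˣ, ∀ s ∈ S, (u : T) * s * ((u⁻¹ : Tˣ) : T) ∈ S) :
    {u : T | IsUnit u} ⊆ rightMultipliers T I S := by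
  rintro _ ⟨u, rfl⟩ f hf s hs
  have hconj : (f * C ((u : T) : R)).eval (s : R) = f.eval ((u * s * ↑u⁻¹ : T) : R) * (u : T) :=
    eval_mul_C_units f (Units.map T.subtype.toMonoidHom u) s
  rw [hconj]
  exact coe_mul_mem_image (hf _ (hS u s hs)) u

theorem rightMultipliers_eq_top
    (hgen : Subring.closure (Set.center T ∪ {u : T | IsUnit u}) = ⊤)
    (hS : ∀ u : Tˣ, ∀ s ∈ S, (u : T) * s * ((u⁻¹ : Tˣ) : T) ∈ S) :
    rightMultipliers T I S = ⊤ :=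
  top_le_iff.mp <| hgen ▸ Subring.closure_le.mpr
    (Set.union_subset center_subset_rightMultipliers (isUnit_subset_rightMultipliers hS))

end PolRight

/-- If the subring `T` of `R` is generated by units as an algebra over its center
(every element of `T` is a finite sum of products of central elements and units of `T`),
then (1) `Pol^r(R,T,I)` is closed under right multiplication by constants from `T`
(i.e. is a right `T`-module), and (2) more generally, for every `S ⊆ T` closed under
conjugation by units of `T`, `Pol^r(R,S,I)` is closed under right multiplication by
constants from `T` (i.e. is a right `T`-module). -/
theorem polRight_rightModule_of_generated_by_units
    {R : Type*} [Ring R] (T : Subring R) (I : TwoSidedIdeal T)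
    (hgen : Subring.closure (Set.center T ∪ {u : T | IsUnit u}) = ⊤) :
    (∀ f ∈ PolRight T I (Set.univ : Set T), ∀ t : T,
      f * Polynomial.C (t : R) ∈ PolRight T I (Set.univ : Set T)) ∧
    (∀ S : Set T, (∀ u : Units T, ∀ s ∈ S, (u : T) * s * ((u⁻¹ : Units T) : T) ∈ S) →
      ∀ f ∈ PolRight T I S, ∀ t : T, f * Polynomial.C (t : R) ∈ PolRight T I S) := by
  have closed : ∀ S : Set T, (∀ u : Tˣ, ∀ s ∈ S, (u : T) * s * ((u⁻¹ : Tˣ) : T) ∈ S) →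
      ∀ f ∈ PolRight T I S, ∀ t : T, f * C (t : R) ∈ PolRight T I S := by
    intro S hS f hf t
    have ht : t ∈ PolRight.rightMultipliers T I S := by
      rw [PolRight.rightMultipliers_eq_top hgen hS]
      exact Subring.mem_top t
    exact ht f hf
  exact ⟨closed Set.univ fun _ _ _ => Set.mem_univ _, closed⟩
end

section
/- Let R be a (possibly noncommutative) ring that is generated by units as an algebra over its center, and let S ⊆ R be closed under conjugation by units of R (u s u^{-1} ∈ S whenever s ∈ S and u is a unit of R). Then N^r_R(S) is a two-sided ideal of R[x], i.e., S is a right null-ideal set. -/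
/-! Right evaluation at `s` turns `f ↦ g * f` into `f(s) ↦ Σ gᵢ f(s) sⁱ`, so `N^r_R(S)` is always a
left ideal of `R[x]`. For right multiplication it suffices to treat ring generators of `R[x]`:
`x` (as `(f x)(s) = f(s) s`), central constants (`(f c)(s) = f(s) c`) and unit constants, where
`(f u)(s) = f(u s u⁻¹) u`; the last vanishes on `S` because `S` is closed under conjugation. -/

open Polynomial

/-- The set `N^r_R(S)` of right null-polynomials on a subset `S` of `R`.
Mathlib's `Polynomial.eval s f = ∑ k, f.coeff k * s ^ k` is exactly right
evaluation `f_r(s)`. -/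
def rightNullPolysOn (R : Type*) [Ring R] (S : Set R) : Set R[X] :=
  {f : R[X] | ∀ s ∈ S, f.eval s = 0}

/-- A subset `N` of a (possibly noncommutative) ring is a two-sided ideal:
an additive subgroup closed under multiplication by arbitrary elements on both sides. -/
def IsTwoSidedIdealSet {R : Type*} [Ring R] (N : Set R) : Prop :=
  0 ∈ N ∧ (∀ a ∈ N, ∀ b ∈ N, a + b ∈ N) ∧ (∀ a ∈ N, -a ∈ N) ∧
    (∀ g : R, ∀ a ∈ N, g * a ∈ N) ∧ (∀ g : R, ∀ a ∈ N, a * g ∈ N)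

theorem Ideal.isTwoSided_of_closure_eq_top {A : Type*} [Ring A] (I : Ideal A) {T : Set A}
    (hT : Subring.closure T = ⊤) (h : ∀ t ∈ T, ∀ a ∈ I, a * t ∈ I) : I.IsTwoSided := by
  suffices ∀ b, ∀ a ∈ I, a * b ∈ I from ⟨fun b ha => this b _ ha⟩
  intro b
  induction (hT ▸ trivial : b ∈ Subring.closure T) using Subring.closure_induction with
  | mem t ht => exact h t ht
  | zero => simp
  | one => simp
  | add b c _ _ hb hc => exact fun a ha => (mul_add a b c).symm ▸ I.add_mem (hb a ha) (hc a ha)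
  | neg b _ hb => exact fun a ha => (mul_neg a b).symm ▸ I.neg_mem (hb a ha)
  | mul b c _ _ hb hc => exact fun a ha => (mul_assoc a b c) ▸ hc _ (hb a ha)

theorem Ideal.isTwoSidedIdealSet {A : Type*} [Ring A] (I : Ideal A) [I.IsTwoSided] :
    IsTwoSidedIdealSet (I : Set A) :=
  ⟨I.zero_mem, fun _ ha _ hb => I.add_mem ha hb, fun _ => I.neg_mem,
    fun g _ => I.mul_mem_left g, fun g _ => I.mul_mem_right g⟩

namespace Polynomial

variable {R : Type*} [Ring R]

theorem closure_insert_X_image_C_eq_top {T : Set R} (hT : Subring.closure T = ⊤) :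
    Subring.closure (insert X (C '' T)) = ⊤ := by
  have hC : ∀ a : R, C a ∈ Subring.closure (insert X (C '' T)) := by
    intro a
    have ha : C a ∈ (Subring.closure T).map C := ⟨a, hT ▸ trivial, rfl⟩
    rw [RingHom.map_closure] at ha
    exact Subring.closure_mono (Set.subset_insert _ _) ha
  refine (Subring.eq_top_iff' _).2 fun p => ?_
  induction p using Polynomial.induction_on' with
  | add p q hp hq => exact add_mem hp hq
  | monomial n a =>
    rw [← C_mul_X_pow_eq_monomial]
    exact mul_mem (hC a) (pow_mem (Subring.subset_closure (Set.mem_insert _ _)) n)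

theorem eval_monomial_mul_s17 (n : ℕ) (a : R) (f : R[X]) (s : R) :
    (monomial n a * f).eval s = a * f.eval s * s ^ n := by
  rw [← C_mul_X_pow_eq_monomial, mul_assoc, X_pow_mul, eval_C_mul, eval_mul_X_pow, mul_assoc]

theorem eval_mul_C_unit (f : R[X]) (u : Rˣ) (s : R) :
    (f * C (u : R)).eval s = f.eval ((u : R) * s * ((u⁻¹ : Rˣ) : R)) * u := by
  induction f using Polynomial.induction_on' with
  | add p q hp hq => simp only [add_mul, eval_add, hp, hq]
  | monomial n a =>
    rw [monomial_mul_C, eval_monomial, eval_monomial, u.conj_pow, ← mul_assoc, ← mul_assoc,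
      mul_assoc _ _ (u : R), Units.inv_mul, mul_one]

end Polynomial

def rightNullIdeal (R : Type*) [Ring R] (S : Set R) : Ideal R[X] where
  carrier := rightNullPolysOn R S
  zero_mem' _ _ := eval_zero
  add_mem' hf hg s hs := by rw [eval_add, hf s hs, hg s hs, add_zero]
  smul_mem' g f hf s hs := by
    induction g using Polynomial.induction_on' with
    | add p q hp hq => rw [add_smul, eval_add, hp, hq, add_zero]
    | monomial n a => rw [smul_eq_mul, eval_monomial_mul_s17, hf s hs, mul_zero, zero_mul]

/-- If `R` is generated by units as an algebra over its center (every element of `R`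
is a finite sum of products of central elements and units of `R`), and `S ⊆ R` is
closed under conjugation by units of `R`, then `N^r_R(S)` is a (two-sided) ideal of
`R[x]`, i.e. `S` is a right null-ideal set. -/
theorem rightNullPolysOn_isTwoSidedIdeal_of_generated_by_units
    (R : Type*) [Ring R]
    (hgen : Subring.closure (Set.center R ∪ {u : R | IsUnit u}) = ⊤)
    (S : Set R) (hS : ∀ u : Rˣ, ∀ s ∈ S, (u : R) * s * ((u⁻¹ : Rˣ) : R) ∈ S) :
    IsTwoSidedIdealSet (rightNullPolysOn R S) := by
  have : (rightNullIdeal R S).IsTwoSided := by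
    refine (rightNullIdeal R S).isTwoSided_of_closure_eq_top
      (closure_insert_X_image_C_eq_top hgen) ?_
    rintro _ (rfl | ⟨c, hc | ⟨u, rfl⟩, rfl⟩) f hf s hs
    · rw [eval_mul_X, hf s hs, zero_mul]
    · rw [eval_mul_C_of_commute ((Set.mem_center_iff.mp hc).comm s), hf s hs, zero_mul]
    · rw [eval_mul_C_unit, hf _ (hS u s hs), zero_mul]
  exact (rightNullIdeal R S).isTwoSidedIdealSet
end
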